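/- Let Σ' ⊆ Σ be a subset with Σ' = −Σ'. Let (ω_C) be a family of functions ω_C : V → [0,1], indexed by the chambers of the arrangement defined by Σ, satisfying: (1) for every chamber C and every X₀ ∈ V there exists c ∈ ℝ such that for all X ∈ V and all α ∈ Σ_C, if α(X − X₀) < c then ω_C(X) = 0; and (2) Σ_C ω_C(X) = 1 for every X ∈ V, the sum running over all chambers C. For each chamber C' of the arrangement defined by Σ', define ω_{C'} = Σ_C ω_C, the sum running over the chambers C of the arrangement defined by Σ with C ⊆ C'. Then the family (ω_{C'}), indexed by the chambers of the arrangement defined by Σ', satisfies the analogues of conditions (1) and (2) with Σ replaced by Σ'. -/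

import Mathlib

open Set

/-- The set of regular points of the arrangement defined by the finite set `S`
of linear forms: the complement of the union of the kernels. -/
def regularSet {V : Type*} [NormedAddCommGroup V] [NormedSpace ℝ V]
    (S : Finset (V →ₗ[ℝ] ℝ)) : Set V :=
  {v | ∀ α ∈ S, α v ≠ 0}

/-- A chamber of the arrangement defined by `S` is a connected component of the
set of regular points. -/
def IsChamber {V : Type*} [NormedAddCommGroup V] [NormedSpace ℝ V]
    (S : Finset (V →ₗ[ℝ] ℝ)) (C : Set V) : Prop :=
  ∃ x ∈ regularSet S, C = connectedComponentIn (regularSet S) x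

/-- `posForms S C` is the set `Σ_C` of elements of `S` that are positive on `C`. -/
def posForms {V : Type*} [NormedAddCommGroup V] [NormedSpace ℝ V]
    (S : Finset (V →ₗ[ℝ] ℝ)) (C : Set V) : Set (V →ₗ[ℝ] ℝ) :=
  {α | α ∈ S ∧ ∀ x ∈ C, 0 < α x}

/-!
The chamber of a regular point `x` is its sign cell, the set of points at which every form
has the same sign as at `x`: the sign cell is convex, and no form can change sign on a
connected set of regular points. Hence there are finitely many chambers, and each chamber
of `Σ` lies in exactly one chamber of `Σ'`, the sign cell of any of its points for `Σ'`.
Condition (2) is then a regrouping of a finite sum, and condition (1) holds with the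
minimum of the finitely many constants, since `Σ'_{C'} ⊆ Σ_C` whenever `C ⊆ C'`.
-/

open Filter SignType

lemma IsPreconnected.sign_eq {X : Type*} [TopologicalSpace X] {K : Set X}
    (hK : IsPreconnected K) {f : X → ℝ} (hf : ContinuousOn f K) (hf0 : ∀ x ∈ K, f x ≠ 0)
    {a b : X} (ha : a ∈ K) (hb : b ∈ K) : sign (f a) = sign (f b) := by
  have hzero : (0 : ℝ) ∉ uIcc (f a) (f b) := fun h0 => by
    obtain ⟨x, hx, hfx⟩ := (hK.image f hf).ordConnected.uIcc_subset
      (mem_image_of_mem f ha) (mem_image_of_mem f hb) h0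
    exact hf0 x hx hfx
  rcases (hf0 a ha).lt_or_gt with hfa | hfa <;> rcases (hf0 b hb).lt_or_gt with hfb | hfb
  · simp [hfa, hfb]
  · exact absurd (mem_uIcc.2 (Or.inl ⟨hfa.le, hfb.le⟩)) hzero
  · exact absurd (mem_uIcc.2 (Or.inr ⟨hfb.le, hfa.le⟩)) hzero
  · simp [hfa, hfb]

lemma convex_setOf_sign_eq (s : SignType) : Convex ℝ {t : ℝ | sign t = s} := by
  obtain rfl | rfl | rfl := s.trichotomy
  · simp only [sign_eq_neg_one_iff]; exact convex_Iio 0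
  · simp only [sign_eq_zero_iff]; exact convex_singleton 0
  · simp only [sign_eq_one_iff]; exact convex_Ioi 0

theorem finsum_mem_fiberwise {α β M : Type*} [AddCommMonoid M] {p : α → Prop} {q : β → Prop}
    (r : α → β → Prop) (hp : {a | p a}.Finite) (hq : {b | q b}.Finite)
    (h : ∀ a, p a → ∃! b, q b ∧ r a b) (f : α → M) :
    ∑ᶠ b ∈ {b | q b}, ∑ᶠ a ∈ {a | p a ∧ r a b}, f a = ∑ᶠ a ∈ {a | p a}, f a := by
  have hunion : ⋃ b ∈ {b | q b}, {a | p a ∧ r a b} = {a | p a} := by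
    ext a
    simp only [mem_iUnion, mem_ofPred_eq, exists_prop]
    exact ⟨fun ⟨_, _, ha, _⟩ => ha, fun ha => (h a ha).exists.imp fun _ hb => ⟨hb.1, ha, hb.2⟩⟩
  have hdisj : {b | q b}.PairwiseDisjoint fun b => {a | p a ∧ r a b} :=
    fun b₁ hb₁ b₂ hb₂ hne => Set.disjoint_left.2 fun a ha₁ ha₂ =>
      hne ((h a ha₁.1).unique ⟨hb₁, ha₁.2⟩ ⟨hb₂, ha₂.2⟩)
  rw [← finsum_mem_biUnion hdisj hq fun b _ => hp.subset fun a ha => ha.1, hunion]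

section Chambers

variable {V : Type*} [NormedAddCommGroup V] [NormedSpace ℝ V]

def signCell (S : Finset (V →ₗ[ℝ] ℝ)) (x : V) : Set V :=
  {v | ∀ α ∈ S, sign (α v) = sign (α x)}

lemma mem_signCell_self (S : Finset (V →ₗ[ℝ] ℝ)) (x : V) : x ∈ signCell S x :=
  fun _ _ => rfl

lemma signCell_eq_of_mem {S : Finset (V →ₗ[ℝ] ℝ)} {x y : V} (h : x ∈ signCell S y) :
    signCell S x = signCell S y :=
  Set.ext fun _ => ⟨fun hv α hα => (hv α hα).trans (h α hα),
    fun hv α hα => (hv α hα).trans (h α hα).symm⟩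

lemma signCell_anti {S S' : Finset (V →ₗ[ℝ] ℝ)} (h : S' ⊆ S) (x : V) :
    signCell S x ⊆ signCell S' x :=
  fun _ hv α hα => hv α (h hα)

lemma signCell_subset_regularSet {S : Finset (V →ₗ[ℝ] ℝ)} {x : V} (hx : x ∈ regularSet S) :
    signCell S x ⊆ regularSet S := fun v hv α hα hαv => by
  have := hv α hα
  rw [hαv, sign_zero, eq_comm, sign_eq_zero_iff] at this
  exact hx α hα this

lemma convex_signCell (S : Finset (V →ₗ[ℝ] ℝ)) (x : V) : Convex ℝ (signCell S x) := by
  have : signCell S x = ⋂ α ∈ S, α ⁻¹' {t | sign t = sign (α x)} := by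
    ext v; simp [signCell]
  rw [this]
  exact convex_iInter₂ fun α _ => (convex_setOf_sign_eq _).linear_preimage α

lemma regularSet_anti {S S' : Finset (V →ₗ[ℝ] ℝ)} (h : S' ⊆ S) : regularSet S ⊆ regularSet S' :=
  fun _ hv α hα => hv α (h hα)

lemma posForms_anti {S S' : Finset (V →ₗ[ℝ] ℝ)} (hS : S' ⊆ S) {C C' : Set V} (hC : C ⊆ C') :
    posForms S' C' ⊆ posForms S C :=
  fun _ hα => ⟨hS hα.1, fun v hv => hα.2 v (hC hv)⟩

variable [FiniteDimensional ℝ V]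

lemma connectedComponentIn_regularSet_eq_signCell {S : Finset (V →ₗ[ℝ] ℝ)} {x : V}
    (hx : x ∈ regularSet S) : connectedComponentIn (regularSet S) x = signCell S x := by
  refine Subset.antisymm (fun v hv α hα => ?_) ((convex_signCell S x).isPreconnected
    |>.subset_connectedComponentIn (mem_signCell_self S x) (signCell_subset_regularSet hx))
  have hregular : ∀ w ∈ connectedComponentIn (regularSet S) x, α w ≠ 0 :=
    fun w hw => (connectedComponentIn_subset _ _ hw : w ∈ regularSet S) α hα
  exact isPreconnected_connectedComponentIn.sign_eq
    α.continuous_of_finiteDimensional.continuousOn hregular hv (mem_connectedComponentIn hx)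

lemma isChamber_iff {S : Finset (V →ₗ[ℝ] ℝ)} {C : Set V} :
    IsChamber S C ↔ ∃ x ∈ regularSet S, C = signCell S x := by
  refine exists_congr fun x => and_congr_right fun hx => ?_
  rw [connectedComponentIn_regularSet_eq_signCell hx]

lemma finite_setOf_isChamber (S : Finset (V →ₗ[ℝ] ℝ)) : {C : Set V | IsChamber S C}.Finite := by
  refine (Set.finite_range fun σ : S → SignType => {v : V | ∀ α : S, sign (α.1 v) = σ α}).subset ?_
  rintro C hC
  obtain ⟨x, -, rfl⟩ := isChamber_iff.1 hC
  exact ⟨fun α => sign (α.1 x), by ext v; simp [signCell]⟩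

lemma existsUnique_isChamber_superset {S S' : Finset (V →ₗ[ℝ] ℝ)} (hS : S' ⊆ S) {C : Set V}
    (hC : IsChamber S C) : ∃! C', IsChamber S' C' ∧ C ⊆ C' := by
  obtain ⟨x, hx, rfl⟩ := isChamber_iff.1 hC
  refine ⟨signCell S' x, ⟨isChamber_iff.2 ⟨x, regularSet_anti hS hx, rfl⟩, signCell_anti hS x⟩, ?_⟩
  rintro C' ⟨hC', hsub⟩
  obtain ⟨y, -, rfl⟩ := isChamber_iff.1 hC'
  exact (signCell_eq_of_mem (hsub (mem_signCell_self S x))).symm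

end Chambers

theorem omega_family_subarrangement_general {V : Type*}
    [NormedAddCommGroup V] [NormedSpace ℝ V] [FiniteDimensional ℝ V]
    (S S' : Finset (V →ₗ[ℝ] ℝ)) (hsub : S' ⊆ S)
    (ω : Set V → V → ℝ)
    (h1 : ∀ C : Set V, IsChamber S C → ∀ X₀ : V, ∃ c : ℝ, ∀ X : V,
      ∀ α ∈ posForms S C, α (X - X₀) < c → ω C X = 0)
    (h2 : ∀ X : V, ∑ᶠ C ∈ {C : Set V | IsChamber S C}, ω C X = 1)
    (ω' : Set V → V → ℝ)
    (hω' : ∀ (C' : Set V) (X : V),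
      ω' C' X = ∑ᶠ C ∈ {C : Set V | IsChamber S C ∧ C ⊆ C'}, ω C X) :
    (∀ C' : Set V, IsChamber S' C' → ∀ X₀ : V, ∃ c : ℝ, ∀ X : V,
      ∀ α ∈ posForms S' C', α (X - X₀) < c → ω' C' X = 0) ∧
    (∀ X : V, ∑ᶠ C' ∈ {C' : Set V | IsChamber S' C'}, ω' C' X = 1) := by
  refine ⟨fun C' _ X₀ => ?_, fun X => ?_⟩
  · have hfin : {C | IsChamber S C ∧ C ⊆ C'}.Finite :=
      (finite_setOf_isChamber S).subset fun _ hC => hC.1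
    have hbelow : ∀ᶠ c in atBot, ∀ C ∈ {C | IsChamber S C ∧ C ⊆ C'}, ∀ X : V,
        ∀ α ∈ posForms S' C', α (X - X₀) < c → ω C X = 0 := by
      refine hfin.eventually_all.2 fun C hC => ?_
      obtain ⟨c, hc⟩ := h1 C hC.1 X₀
      exact eventually_atBot.2 ⟨c, fun b hb X α hα hlt =>
        hc X α (posForms_anti hsub hC.2 hα) (hlt.trans_le hb)⟩
    obtain ⟨c, hc⟩ := hbelow.exists
    exact ⟨c, fun X α hα hlt =>
      (hω' C' X).trans (finsum_mem_eq_zero_of_forall_eq_zero fun C hC => hc C hC X α hα hlt)⟩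
  · rw [finsum_mem_congr rfl fun C' _ => hω' C' X, finsum_mem_fiberwise (· ⊆ ·)
      (finite_setOf_isChamber S) (finite_setOf_isChamber S')
      fun C hC => existsUnique_isChamber_superset hsub hC]
    exact h2 X

/-- For a symmetric subset `Σ' ⊆ Σ`, if `(ω_C)` is a family indexed by the chambers of
`Σ` satisfying conditions (1) and (2), then the family `(ω_{C'})` defined on the chambers
of `Σ'` by `ω_{C'} = ∑_{C ⊆ C'} ω_C` again satisfies the analogues of (1) and (2). -/
theorem omega_family_subarrangement {V : Type*}
    [NormedAddCommGroup V] [NormedSpace ℝ V] [FiniteDimensional ℝ V]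
    (S S' : Finset (V →ₗ[ℝ] ℝ)) (hsub : S' ⊆ S)
    (hne : ∀ α ∈ S, α ≠ 0) (hsymm : ∀ α ∈ S, -α ∈ S)
    (hsymm' : ∀ α ∈ S', -α ∈ S')
    (ω : Set V → V → ℝ)
    (hrange : ∀ C : Set V, IsChamber S C → ∀ X : V, ω C X ∈ Set.Icc (0 : ℝ) 1)
    (h1 : ∀ C : Set V, IsChamber S C → ∀ X₀ : V, ∃ c : ℝ, ∀ X : V,
      ∀ α ∈ posForms S C, α (X - X₀) < c → ω C X = 0)
    (h2 : ∀ X : V, ∑ᶠ C ∈ {C : Set V | IsChamber S C}, ω C X = 1)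
    (ω' : Set V → V → ℝ)
    (hω' : ∀ (C' : Set V) (X : V),
      ω' C' X = ∑ᶠ C ∈ {C : Set V | IsChamber S C ∧ C ⊆ C'}, ω C X) :
    (∀ C' : Set V, IsChamber S' C' → ∀ X₀ : V, ∃ c : ℝ, ∀ X : V,
      ∀ α ∈ posForms S' C', α (X - X₀) < c → ω' C' X = 0) ∧
    (∀ X : V, ∑ᶠ C' ∈ {C' : Set V | IsChamber S' C'}, ω' C' X = 1) :=
  omega_family_subarrangement_general S S' hsub ω h1 h2 ω' hω'
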